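/- Let v : [0,π] → ℝ be continuous and let λ ∈ ℝ be such that d(λ) ≠ 0. Then for every continuous function f : [0,π] → ℝ, the function u(x) = −(1/d(λ)) ( y₂(x,λ) ∫₀^x y₁(ξ,λ) f(ξ) dξ + y₁(x,λ) ∫_x^π y₂(ξ,λ) f(ξ) dξ ) is twice continuously differentiable on [0,π] and satisfies −u'' + v(x)u − λu = f on [0,π] together with the boundary conditions u(0) = u(π) = 0. -/

import Mathlib

/-!
Write `q = v - λ`, so that `y₁'' = q y₁` and `y₂'' = q y₂`, and put
`P = y₂ F₁ - y₁ G₂` with `F₁ = ∫₀ˣ y₁ f` and `G₂ = ∫_πˣ y₂ f`, so that `u = -P / d`.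
Differentiating, the `f`-terms cancel in `P'`, and `P'' = q P + W f` with the Wronskian
`W = y₁ y₂' - y₁' y₂`. Since `y₁, y₂` solve the same equation, `W` is constant, and evaluating
at `π` gives `W = d`; hence `u'' = q u - f`.
-/

open Real Set MeasureTheory intervalIntegral

theorem hasDerivWithinAt_integral_of_continuousOn_Icc {a b c x : ℝ} {g : ℝ → ℝ}
    (hg : ContinuousOn g (Icc a b)) (hc : c ∈ Icc a b) (hx : x ∈ Icc a b) :
    HasDerivWithinAt (fun t => ∫ ξ in c..t, g ξ) (g x) (Icc a b) x :=
  -- the `Fact` supplies the `FTCFilter` instance for `𝓝[Icc a b] x`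
  have : Fact (x ∈ Icc a b) := ⟨hx⟩
  integral_hasDerivWithinAt_right ((hg.mono (uIcc_subset_Icc hc hx)).intervalIntegrable)
    (hg.stronglyMeasurableAtFilter_nhdsWithin measurableSet_Icc x) (hg x hx)

section SecondOrderLinear

variable {q y₁ y₁' y₂ y₂' : ℝ → ℝ} {s : Set ℝ} {x : ℝ}

theorem hasDerivWithinAt_wronskian
    (hy₁ : HasDerivWithinAt y₁ (y₁' x) s x) (hy₁' : HasDerivWithinAt y₁' (q x * y₁ x) s x)
    (hy₂ : HasDerivWithinAt y₂ (y₂' x) s x) (hy₂' : HasDerivWithinAt y₂' (q x * y₂ x) s x) :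
    HasDerivWithinAt (fun t => y₁ t * y₂' t - y₁' t * y₂ t) 0 s x :=
  ((hy₁.mul hy₂').sub (hy₁'.mul hy₂)).congr_deriv (by ring)

theorem wronskian_eq_of_mem_Icc {a b : ℝ}
    (hy₁ : ∀ x ∈ Icc a b, HasDerivWithinAt y₁ (y₁' x) (Icc a b) x)
    (hy₁' : ∀ x ∈ Icc a b, HasDerivWithinAt y₁' (q x * y₁ x) (Icc a b) x)
    (hy₂ : ∀ x ∈ Icc a b, HasDerivWithinAt y₂ (y₂' x) (Icc a b) x)
    (hy₂' : ∀ x ∈ Icc a b, HasDerivWithinAt y₂' (q x * y₂ x) (Icc a b) x)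
    {z : ℝ} (hx : x ∈ Icc a b) (hz : z ∈ Icc a b) :
    y₁ x * y₂' x - y₁' x * y₂ x = y₁ z * y₂' z - y₁' z * y₂ z := by
  have hW : ∀ t ∈ Icc a b,
      HasDerivWithinAt (fun t => y₁ t * y₂' t - y₁' t * y₂ t) 0 (Icc a b) t := fun t ht =>
    hasDerivWithinAt_wronskian (hy₁ t ht) (hy₁' t ht) (hy₂ t ht) (hy₂' t ht)
  have hconst := constant_of_has_deriv_right_zero
    (fun t ht => (hW t ht).continuousWithinAt) fun t ht =>
      (hW t (Ico_subset_Icc_self ht)).mono_of_mem_nhdsWithin (Icc_mem_nhdsGE_of_mem ht)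
  exact (hconst x hx).trans (hconst z hz).symm

variable {F G g : ℝ → ℝ}

theorem hasDerivWithinAt_variationOfParameters
    (hy₁ : HasDerivWithinAt y₁ (y₁' x) s x) (hy₂ : HasDerivWithinAt y₂ (y₂' x) s x)
    (hF : HasDerivWithinAt F (y₁ x * g x) s x) (hG : HasDerivWithinAt G (y₂ x * g x) s x) :
    HasDerivWithinAt (fun t => y₂ t * F t - y₁ t * G t) (y₂' x * F x - y₁' x * G x) s x :=
  ((hy₂.mul hF).sub (hy₁.mul hG)).congr_deriv (by ring)

theorem hasDerivWithinAt_deriv_variationOfParameters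
    (hy₁' : HasDerivWithinAt y₁' (q x * y₁ x) s x)
    (hy₂' : HasDerivWithinAt y₂' (q x * y₂ x) s x)
    (hF : HasDerivWithinAt F (y₁ x * g x) s x) (hG : HasDerivWithinAt G (y₂ x * g x) s x) :
    HasDerivWithinAt (fun t => y₂' t * F t - y₁' t * G t)
      (q x * (y₂ x * F x - y₁ x * G x) + (y₁ x * y₂' x - y₁' x * y₂ x) * g x) s x :=
  ((hy₂'.mul hF).sub (hy₁'.mul hG)).congr_deriv (by ring)

end SecondOrderLinear

theorem resolvent_solves_inhomogeneous
    (v : ℝ → ℝ) (hv : ContinuousOn v (Icc (0:ℝ) π))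
    (l : ℝ) (y₁ y₁' y₂ y₂' : ℝ → ℝ)
    (hy₁ : ∀ x ∈ Icc (0:ℝ) π, HasDerivWithinAt y₁ (y₁' x) (Icc (0:ℝ) π) x)
    (hy₁' : ∀ x ∈ Icc (0:ℝ) π, HasDerivWithinAt y₁' ((v x - l) * y₁ x) (Icc (0:ℝ) π) x)
    (h10 : y₁ 0 = 0)
    (hy₂ : ∀ x ∈ Icc (0:ℝ) π, HasDerivWithinAt y₂ (y₂' x) (Icc (0:ℝ) π) x)
    (hy₂' : ∀ x ∈ Icc (0:ℝ) π, HasDerivWithinAt y₂' ((v x - l) * y₂ x) (Icc (0:ℝ) π) x)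
    (h20 : y₂ π = 0) (h21 : y₂' π = 1)
    (hd : y₁ π ≠ 0)
    (f : ℝ → ℝ) (hf : ContinuousOn f (Icc (0:ℝ) π))
    (u : ℝ → ℝ)
    (hu : ∀ x : ℝ, u x = -(1 / y₁ π) *
      (y₂ x * (∫ ξ in (0:ℝ)..x, y₁ ξ * f ξ) + y₁ x * (∫ ξ in x..π, y₂ ξ * f ξ))) :
    ∃ u' u'' : ℝ → ℝ,
      (∀ x ∈ Icc (0:ℝ) π, HasDerivWithinAt u (u' x) (Icc (0:ℝ) π) x) ∧
      (∀ x ∈ Icc (0:ℝ) π, HasDerivWithinAt u' (u'' x) (Icc (0:ℝ) π) x) ∧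
      ContinuousOn u'' (Icc (0:ℝ) π) ∧
      (∀ x ∈ Icc (0:ℝ) π, -(u'' x) + v x * u x - l * u x = f x) ∧
      u 0 = 0 ∧ u π = 0 := by
  have h0 : (0:ℝ) ∈ Icc 0 π := ⟨le_rfl, pi_pos.le⟩
  have hπ : π ∈ Icc 0 π := ⟨pi_pos.le, le_rfl⟩
  set F := fun x => ∫ ξ in (0:ℝ)..x, y₁ ξ * f ξ
  set G := fun x => ∫ ξ in π..x, y₂ ξ * f ξ
  have hy₁c : ContinuousOn y₁ (Icc 0 π) := fun t ht => (hy₁ t ht).continuousWithinAt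
  have hy₂c : ContinuousOn y₂ (Icc 0 π) := fun t ht => (hy₂ t ht).continuousWithinAt
  have hF : ∀ x ∈ Icc 0 π, HasDerivWithinAt F (y₁ x * f x) (Icc 0 π) x := fun x hx =>
    hasDerivWithinAt_integral_of_continuousOn_Icc (hy₁c.mul hf) h0 hx
  have hG : ∀ x ∈ Icc 0 π, HasDerivWithinAt G (y₂ x * f x) (Icc 0 π) x := fun x hx =>
    hasDerivWithinAt_integral_of_continuousOn_Icc (hy₂c.mul hf) hπ hx
  have hW x (hx : x ∈ Icc 0 π) : y₁ x * y₂' x - y₁' x * y₂ x = y₁ π := by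
    simpa [h20, h21] using wronskian_eq_of_mem_Icc hy₁ hy₁' hy₂ hy₂' hx hπ
  have hu_eq : u = fun x => -(1 / y₁ π) * (y₂ x * F x - y₁ x * G x) := by
    ext x
    rw [hu x, integral_symm π x]
    ring
  have hu' : ∀ x ∈ Icc 0 π,
      HasDerivWithinAt u (-(1 / y₁ π) * (y₂' x * F x - y₁' x * G x)) (Icc 0 π) x := by
    rw [hu_eq]
    exact fun x hx => (hasDerivWithinAt_variationOfParameters (hy₁ x hx) (hy₂ x hx)
      (hF x hx) (hG x hx)).const_mul _
  have hu_cont : ContinuousOn u (Icc 0 π) := fun x hx => (hu' x hx).continuousWithinAt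
  refine ⟨_, fun x => (v x - l) * u x - f x, hu', fun x hx => ?_,
    ((hv.sub continuousOn_const).mul hu_cont).sub hf, fun x _ => by ring, ?_, ?_⟩
  · refine ((hasDerivWithinAt_deriv_variationOfParameters (q := (v · - l)) (hy₁' x hx)
      (hy₂' x hx) (hF x hx) (hG x hx)).const_mul (-(1 / y₁ π))).congr_deriv ?_
    rw [hW x hx, hu_eq]
    field_simp
    ring
  · simp [hu_eq, F, h10]
  · simp [hu_eq, G, h20]
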